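/- Let M = ℝ^{m₁×R} × ⋯ × ℝ^{m_k×R} and fix U ∈ M and δ > 0. Define g_U(ξ,η) = Σᵢ trace(ξ⁽ⁱ⁾ Hᵢ (η⁽ⁱ⁾)ᵀ) where Hᵢ = ((U⁽ʲ⁾)^{⊙_{j≠i}})ᵀ(U⁽ʲ⁾)^{⊙_{j≠i}} + δI_R. Then g_U is a symmetric positive definite bilinear form (an inner product) on the tangent space T_U M = ℝ^{m₁×R} × ⋯ × ℝ^{m_k×R}. -/
import Mathlib


open Matrix

/-- Khatri–Rao product of all factor matrices `U j` for `j ≠ i`. -/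
def khatriRaoExcept {k R : ℕ} {m : Fin k → ℕ} (i : Fin k)
    (U : ∀ j, Matrix (Fin (m j)) (Fin R) ℝ) :
    Matrix (∀ j : {j : Fin k // j ≠ i}, Fin (m j.1)) (Fin R) ℝ :=
  fun x r => ∏ j : {j : Fin k // j ≠ i}, U j.1 (x j) r

/-- The preconditioning matrix `Hᵢ = (⊙_{j≠i} U⁽ʲ⁾)ᵀ(⊙_{j≠i} U⁽ʲ⁾) + δ I`. -/
def preconMat {k R : ℕ} {m : Fin k → ℕ} (δ : ℝ) (i : Fin k)
    (U : ∀ j, Matrix (Fin (m j)) (Fin R) ℝ) : Matrix (Fin R) (Fin R) ℝ :=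
  (khatriRaoExcept i U)ᵀ * khatriRaoExcept i U + δ • (1 : Matrix (Fin R) (Fin R) ℝ)

/-- The preconditioned metric `g_U(ξ,η) = Σᵢ trace(ξ⁽ⁱ⁾ Hᵢ (η⁽ⁱ⁾)ᵀ)`. -/
def preconMetric {k R : ℕ} {m : Fin k → ℕ} (δ : ℝ)
    (U ξ η : ∀ j : Fin k, Matrix (Fin (m j)) (Fin R) ℝ) : ℝ :=
  ∑ i : Fin k, Matrix.trace (ξ i * preconMat δ i U * (η i)ᵀ)

lemma trace_transpose_mul_self {n p : Type*} [Fintype n] [Fintype p]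
    (B : Matrix n p ℝ) : (Bᵀ * B).trace = ∑ i, ∑ j, (B i j)^2 := by
  simp [Matrix.trace, Matrix.diag, Matrix.mul_apply, sq]
  exact Finset.sum_comm

lemma preconMat_transpose {k R : ℕ} {m : Fin k → ℕ} (δ : ℝ) (i : Fin k)
    (U : ∀ j, Matrix (Fin (m j)) (Fin R) ℝ) : (preconMat δ i U)ᵀ = preconMat δ i U := by
  simp [preconMat, Matrix.transpose_add, Matrix.transpose_mul, Matrix.transpose_smul]

lemma key {k R : ℕ} {m : Fin k → ℕ} (δ : ℝ) (i : Fin k)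
    (U : ∀ j, Matrix (Fin (m j)) (Fin R) ℝ) (A : Matrix (Fin (m i)) (Fin R) ℝ) :
    (A * preconMat δ i U * Aᵀ).trace
      = (∑ x, ∑ r, ((khatriRaoExcept i U * Aᵀ) x r)^2)
        + δ * ∑ r, ∑ a, (A a r)^2 := by
  have h1 : A * preconMat δ i U * Aᵀ
      = (khatriRaoExcept i U * Aᵀ)ᵀ * (khatriRaoExcept i U * Aᵀ)
        + δ • ((Aᵀ)ᵀ * Aᵀ) := by
    simp [preconMat, Matrix.mul_add, Matrix.add_mul, Matrix.smul_mul, Matrix.mul_smul,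
      Matrix.transpose_mul, Matrix.mul_assoc]
  rw [h1, Matrix.trace_add, Matrix.trace_smul, trace_transpose_mul_self,
    trace_transpose_mul_self, smul_eq_mul]
  simp [Matrix.transpose_apply]

theorem preconMetric_inner_product {k R : ℕ} {m : Fin k → ℕ} (δ : ℝ) (hδ : 0 < δ)
    (U : ∀ j : Fin k, Matrix (Fin (m j)) (Fin R) ℝ) :
    (∀ ξ η, preconMetric δ U ξ η = preconMetric δ U η ξ) ∧
    (∀ (a : ℝ) (ξ ξ' η : ∀ j : Fin k, Matrix (Fin (m j)) (Fin R) ℝ),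
      preconMetric δ U (a • ξ + ξ') η
        = a * preconMetric δ U ξ η + preconMetric δ U ξ' η) ∧
    (∀ ξ, 0 ≤ preconMetric δ U ξ ξ) ∧
    (∀ ξ, preconMetric δ U ξ ξ = 0 → ξ = 0) := by
  have term_eq : ∀ (ξ : ∀ j : Fin k, Matrix (Fin (m j)) (Fin R) ℝ) (i : Fin k),
      0 ≤ (ξ i * preconMat δ i U * (ξ i)ᵀ).trace := by
    intro ξ i
    rw [key]
    have h1 : 0 ≤ ∑ x, ∑ r, ((khatriRaoExcept i U * (ξ i)ᵀ) x r)^2 :=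
      Finset.sum_nonneg fun _ _ => Finset.sum_nonneg fun _ _ => sq_nonneg _
    have h2 : 0 ≤ ∑ r, ∑ a, (ξ i a r)^2 :=
      Finset.sum_nonneg fun _ _ => Finset.sum_nonneg fun _ _ => sq_nonneg _
    positivity
  refine ⟨?_, ?_, ?_, ?_⟩
  · intro ξ η
    unfold preconMetric
    refine Finset.sum_congr rfl fun i _ => ?_
    calc (ξ i * preconMat δ i U * (η i)ᵀ).trace
        = ((ξ i * preconMat δ i U * (η i)ᵀ)ᵀ).trace := (Matrix.trace_transpose _).symm
      _ = (η i * preconMat δ i U * (ξ i)ᵀ).trace := by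
          rw [Matrix.transpose_mul, Matrix.transpose_mul, Matrix.transpose_transpose,
            preconMat_transpose, Matrix.mul_assoc]
  · intro a ξ ξ' η
    simp only [preconMetric, Pi.add_apply, Pi.smul_apply, Matrix.add_mul, Matrix.smul_mul,
      Matrix.trace_add, Matrix.trace_smul, smul_eq_mul, Finset.sum_add_distrib, Finset.mul_sum]
  · intro ξ
    exact Finset.sum_nonneg fun i _ => term_eq ξ i
  · intro ξ h
    have h0 : ∀ i ∈ Finset.univ, (ξ i * preconMat δ i U * (ξ i)ᵀ).trace = 0 :=
      (Finset.sum_eq_zero_iff_of_nonneg fun i _ => term_eq ξ i).mp h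
    funext i
    have hi := h0 i (Finset.mem_univ i)
    rw [key] at hi
    have h1 : 0 ≤ ∑ x, ∑ r, ((khatriRaoExcept i U * (ξ i)ᵀ) x r)^2 :=
      Finset.sum_nonneg fun _ _ => Finset.sum_nonneg fun _ _ => sq_nonneg _
    have h2 : 0 ≤ ∑ r, ∑ a, (ξ i a r)^2 :=
      Finset.sum_nonneg fun _ _ => Finset.sum_nonneg fun _ _ => sq_nonneg _
    have hz : ∑ r, ∑ a, (ξ i a r)^2 = 0 := by nlinarith
    have := (Finset.sum_eq_zero_iff_of_nonneg
      (fun r _ => Finset.sum_nonneg fun a _ => sq_nonneg (ξ i a r))).mp hz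
    ext a r
    have := (Finset.sum_eq_zero_iff_of_nonneg
      (fun a _ => sq_nonneg (ξ i a r))).mp (this r (Finset.mem_univ r)) a (Finset.mem_univ a)
    simpa using pow_eq_zero_iff (n := 2) (by norm_num) |>.mp this
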